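/- Let G be a locally compact Hausdorff group, K a compact group, α : G^* → K a continuous semigroup homomorphism, ι an idempotent in G^*, and define α_l : G^{luc} → K by α_l(x) = α(xι). Then: (i) α_l is a continuous extension of α (in particular α(ι) = e_K); (ii) if β : G^{luc} → K is any semigroup homomorphism extending α, then β = α_l (so a homomorphic extension, if it exists, is unique and automatically continuous); (iii) if ι commutes with every element of G, then α_l is a semigroup homomorphism on G^{luc}. -/

import Mathlib

open scoped BoundedContinuousFunction
open Filter Topology

set_option synthInstance.maxHeartbeats 1000000
set_option maxHeartbeats 1000000

namespace LucPaper

variable {G : Type*} [Group G] [TopologicalSpace G] [IsTopologicalGroup G]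

/-- Left translation of a bounded continuous function: `lTrans g f x = f (g * x)`. -/
noncomputable def lTrans (g : G) (f : G →ᵇ ℂ) : G →ᵇ ℂ :=
  f.compContinuous ⟨fun x => g * x, continuous_const.mul continuous_id⟩

@[simp] lemma lTrans_apply (g : G) (f : G →ᵇ ℂ) (x : G) : lTrans g f x = f (g * x) := rfl

lemma lTrans_mul (g : G) (f h : G →ᵇ ℂ) : lTrans g (f * h) = lTrans g f * lTrans g h := by
  ext x; simp [lTrans]

lemma lTrans_add (g : G) (f h : G →ᵇ ℂ) : lTrans g (f + h) = lTrans g f + lTrans g h := by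
  ext x; simp [lTrans]

lemma lTrans_smul (g : G) (c : ℂ) (f : G →ᵇ ℂ) : lTrans g (c • f) = c • lTrans g f := by
  ext x; simp [lTrans]

lemma lTrans_sub (g : G) (f h : G →ᵇ ℂ) : lTrans g (f - h) = lTrans g f - lTrans g h := by
  ext x; simp [lTrans]

lemma lTrans_lTrans (x g : G) (f : G →ᵇ ℂ) : lTrans x (lTrans g f) = lTrans (g * x) f := by
  ext y; simp [mul_assoc]

lemma norm_lTrans_le (g : G) (f : G →ᵇ ℂ) : ‖lTrans g f‖ ≤ ‖f‖ :=
  f.norm_compContinuous_le _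

lemma lTrans_algebraMap (g : G) (c : ℂ) :
    lTrans g (algebraMap ℂ (G →ᵇ ℂ) c) = algebraMap ℂ (G →ᵇ ℂ) c := by
  ext x; simp [lTrans]

lemma algebraMap_mem_luc (c : ℂ) :
    Continuous fun g : G => lTrans g (algebraMap ℂ (G →ᵇ ℂ) c) := by
  have e : (fun g : G => lTrans g (algebraMap ℂ (G →ᵇ ℂ) c)) =
      fun _ : G => algebraMap ℂ (G →ᵇ ℂ) c :=
    funext fun g => lTrans_algebraMap g c
  rw [e]
  exact continuous_const

/-- The `C*`-algebra `LUC(G)` of bounded left uniformly continuous complex functions on `G`,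
realized as a subalgebra of the bounded continuous functions. -/
noncomputable def LUC (G : Type*) [Group G] [TopologicalSpace G] [IsTopologicalGroup G] :
    Subalgebra ℂ (G →ᵇ ℂ) where
  carrier := {f | Continuous fun g : G => lTrans g f}
  mul_mem' {f h} hf hh := by
    have hf' : Continuous fun g : G => lTrans g f := hf
    have hh' : Continuous fun g : G => lTrans g h := hh
    have e : (fun g : G => lTrans g (f * h)) = fun g => lTrans g f * lTrans g h :=
      funext fun g => lTrans_mul g f h
    show Continuous fun g : G => lTrans g (f * h)
    rw [e]
    exact hf'.mul hh'
  add_mem' {f h} hf hh := by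
    have hf' : Continuous fun g : G => lTrans g f := hf
    have hh' : Continuous fun g : G => lTrans g h := hh
    have e : (fun g : G => lTrans g (f + h)) = fun g => lTrans g f + lTrans g h :=
      funext fun g => lTrans_add g f h
    show Continuous fun g : G => lTrans g (f + h)
    rw [e]
    exact hf'.add hh'
  algebraMap_mem' c := algebraMap_mem_luc c


section Instances
set_option synthInstance.maxHeartbeats 1000000 in
noncomputable instance instLUCNormedAddCommGroup (G : Type*) [Group G] [TopologicalSpace G]
    [IsTopologicalGroup G] : NormedAddCommGroup (LUC G) := inferInstance

set_option synthInstance.maxHeartbeats 1000000 in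
noncomputable instance instLUCNormedSpace (G : Type*) [Group G] [TopologicalSpace G]
    [IsTopologicalGroup G] : NormedSpace ℂ (LUC G) := inferInstance

set_option synthInstance.maxHeartbeats 1000000 in
noncomputable instance instLUCNormedRing (G : Type*) [Group G] [TopologicalSpace G]
    [IsTopologicalGroup G] : NormedRing (LUC G) := inferInstance
end Instances

/-- `LUC(G)^*`, the dual Banach space of `LUC(G)`. -/
noncomputable abbrev Ld (G : Type*) [Group G] [TopologicalSpace G] [IsTopologicalGroup G] :=
  StrongDual ℂ (LUC G)

/-- Left translation as a map `LUC G → LUC G`. -/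
noncomputable def lTransL (g : G) (f : LUC G) : LUC G :=
  ⟨lTrans g (f : G →ᵇ ℂ), by
    have hf : Continuous fun h : G => lTrans h (f : G →ᵇ ℂ) := f.2
    have e : (fun h : G => lTrans h (lTrans g (f : G →ᵇ ℂ))) =
        (fun k : G => lTrans k (f : G →ᵇ ℂ)) ∘ fun h : G => g * h := by
      funext h
      exact lTrans_lTrans h g (f : G →ᵇ ℂ)
    show Continuous fun h : G => lTrans h (lTrans g (f : G →ᵇ ℂ))
    rw [e]
    exact hf.comp (continuous_const.mul continuous_id)⟩

@[simp] lemma lTransL_coe (g : G) (f : LUC G) :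
    (lTransL g f : G →ᵇ ℂ) = lTrans g (f : G →ᵇ ℂ) := rfl

lemma continuous_lTransL (f : LUC G) : Continuous fun g : G => lTransL g f :=
  Continuous.subtype_mk f.2 _

lemma norm_lTransL_le (g : G) (f : LUC G) : ‖lTransL g f‖ ≤ ‖f‖ :=
  norm_lTrans_le g (f : G →ᵇ ℂ)

lemma lTransL_add (g : G) (f h : LUC G) : lTransL g (f + h) = lTransL g f + lTransL g h :=
  Subtype.ext (lTrans_add g _ _)

lemma lTransL_smul (g : G) (c : ℂ) (f : LUC G) : lTransL g (c • f) = c • lTransL g f :=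
  Subtype.ext (lTrans_smul g c _)

lemma lTransL_sub (g : G) (f h : LUC G) : lTransL g (f - h) = lTransL g f - lTransL g h :=
  Subtype.ext (lTrans_sub g _ _)

lemma lTransL_mul (g : G) (f h : LUC G) : lTransL g (f * h) = lTransL g f * lTransL g h :=
  Subtype.ext (lTrans_mul g _ _)

lemma lTransL_lTransL (x g : G) (f : LUC G) : lTransL x (lTransL g f) = lTransL (g * x) f :=
  Subtype.ext (lTrans_lTrans x g _)

end LucPaper

namespace LucPaper
variable {G : Type*} [Group G] [TopologicalSpace G] [IsTopologicalGroup G]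

/-- The function `n f : g ↦ ⟨n, l_g f⟩` as a bounded continuous function. -/
noncomputable def arensBCF (n : Ld G) (f : LUC G) : G →ᵇ ℂ :=
  BoundedContinuousFunction.ofNormedAddCommGroup (fun g : G => n (lTransL g f))
    (n.continuous.comp (continuous_lTransL f)) (‖n‖ * ‖f‖)
    (fun g => le_trans (n.le_opNorm _)
      (mul_le_mul_of_nonneg_left (norm_lTransL_le g f) (norm_nonneg n)))

@[simp] lemma arensBCF_apply (n : Ld G) (f : LUC G) (g : G) :
    arensBCF n f g = n (lTransL g f) := rfl

lemma norm_arensBCF_le (n : Ld G) (f : LUC G) : ‖arensBCF n f‖ ≤ ‖n‖ * ‖f‖ :=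
  BoundedContinuousFunction.norm_ofNormedAddCommGroup_le _
    (mul_nonneg (norm_nonneg n) (norm_nonneg f)) _

lemma arensBCF_sub (n : Ld G) (f h : LUC G) :
    arensBCF n (f - h) = arensBCF n f - arensBCF n h := by
  ext g
  simp [lTransL_sub]

lemma arensBCF_add (n : Ld G) (f h : LUC G) :
    arensBCF n (f + h) = arensBCF n f + arensBCF n h := by
  ext g
  simp [lTransL_add]

lemma arensBCF_smul (n : Ld G) (c : ℂ) (f : LUC G) :
    arensBCF n (c • f) = c • arensBCF n f := by
  ext g
  simp [lTransL_smul]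

lemma lipschitz_arensBCF (n : Ld G) :
    LipschitzWith ‖n‖₊ fun f : LUC G => arensBCF n f := by
  apply LipschitzWith.of_dist_le_mul
  intro f h
  rw [dist_eq_norm, dist_eq_norm, ← arensBCF_sub]
  have : ‖f - h‖ = ‖(f - h : LUC G)‖ := rfl
  calc ‖arensBCF n (f - h)‖ ≤ ‖n‖ * ‖f - h‖ := norm_arensBCF_le n (f - h)
    _ = ‖n‖₊ * ‖f - h‖ := rfl

lemma lTrans_arensBCF (n : Ld G) (f : LUC G) (g : G) :
    lTrans g (arensBCF n f) = arensBCF n (lTransL g f) := by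
  ext x
  simp only [lTrans_apply, arensBCF_apply]
  rw [lTransL_lTransL]

/-- The element `n f` of `LUC(G)`. -/
noncomputable def arensFn (n : Ld G) (f : LUC G) : LUC G :=
  ⟨arensBCF n f, by
    have e : (fun g : G => lTrans g (arensBCF n f)) =
        (fun h : LUC G => arensBCF n h) ∘ fun g : G => lTransL g f :=
      funext fun g => lTrans_arensBCF n f g
    show Continuous fun g : G => lTrans g (arensBCF n f)
    rw [e]
    exact (lipschitz_arensBCF n).continuous.comp (continuous_lTransL f)⟩

@[simp] lemma arensFn_coe (n : Ld G) (f : LUC G) : (arensFn n f : G →ᵇ ℂ) = arensBCF n f := rfl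

lemma norm_arensFn_le (n : Ld G) (f : LUC G) : ‖arensFn n f‖ ≤ ‖n‖ * ‖f‖ :=
  norm_arensBCF_le n f

/-- The Arens-type product on `LUC(G)^*`: `⟨m · n, f⟩ = ⟨m, n f⟩`. -/
noncomputable def arens (m n : Ld G) : Ld G :=
  LinearMap.mkContinuous
    { toFun := fun f : LUC G => m (arensFn n f)
      map_add' := fun f h => by
        show m (arensFn n (f + h)) = m (arensFn n f) + m (arensFn n h)
        rw [show arensFn n (f + h) = arensFn n f + arensFn n h from
          Subtype.ext (arensBCF_add n f h), map_add]
      map_smul' := fun c f => by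
        show m (arensFn n (c • f)) = c • m (arensFn n f)
        rw [show arensFn n (c • f) = c • arensFn n f from
          Subtype.ext (arensBCF_smul n c f), map_smul] }
    (‖m‖ * ‖n‖)
    (fun f => by
      calc ‖m (arensFn n f)‖ ≤ ‖m‖ * ‖arensFn n f‖ := m.le_opNorm _
        _ ≤ ‖m‖ * (‖n‖ * ‖f‖) :=
            mul_le_mul_of_nonneg_left (norm_arensFn_le n f) (norm_nonneg m)
        _ = ‖m‖ * ‖n‖ * ‖f‖ := by ring)

@[simp] lemma arens_apply (m n : Ld G) (f : LUC G) : arens m n f = m (arensFn n f) := rfl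

end LucPaper
namespace LucPaper
variable {G : Type*} [Group G] [TopologicalSpace G] [IsTopologicalGroup G]

/-- Evaluation at a point of `G`, as an element of `LUC(G)^*`. -/
noncomputable def evalChar (g : G) : Ld G :=
  LinearMap.mkContinuous
    { toFun := fun f : LUC G => (f : G →ᵇ ℂ) g
      map_add' := fun f h => rfl
      map_smul' := fun c f => rfl }
    1 (fun f => by rw [one_mul]; exact (f : G →ᵇ ℂ).norm_coe_le_norm g)

@[simp] lemma evalChar_apply (g : G) (f : LUC G) : evalChar g f = (f : G →ᵇ ℂ) g := rfl

variable (G) in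
/-- The `LUC`-compactification `G^{luc}` realized as the set of nonzero multiplicative
functionals in `LUC(G)^*`. -/
def gLuc : Set (Ld G) :=
  {m | m ≠ 0 ∧ ∀ f h : LUC G, m (f * h) = m f * m h}

variable (G) in
/-- The corona `G^* = G^{luc} \ G` in `LUC(G)^*`. -/
def gStar : Set (Ld G) :=
  gLuc G \ Set.range (evalChar (G := G))

lemma evalChar_mem_gLuc (g : G) : evalChar g ∈ gLuc G := by
  constructor
  · intro h0
    have h1 : evalChar g (1 : LUC G) = 0 := by rw [h0]; rfl
    have h2 : evalChar g (1 : LUC G) = 1 := rfl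
    rw [h2] at h1
    exact one_ne_zero h1
  · intro f h
    have : ((f * h : LUC G) : G →ᵇ ℂ) = (f : G →ᵇ ℂ) * (h : G →ᵇ ℂ) := rfl
    simp [this]

end LucPaper
namespace LucPaper
variable {G : Type*} [Group G] [TopologicalSpace G] [IsTopologicalGroup G]

/-- Membership in `C_0(G)`: vanishing at infinity. -/
def IsC0 (f : G →ᵇ ℂ) : Prop := Tendsto (f : G → ℂ) (cocompact G) (𝓝 0)

variable (G) in
/-- The annihilator `C_0(G)^⊥` of `C_0(G)` in `LUC(G)^*`. -/
noncomputable def C0perp : Submodule ℂ (Ld G) where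
  carrier := {m | ∀ f : LUC G, IsC0 (f : G →ᵇ ℂ) → m f = 0}
  add_mem' {m n} hm hn := fun f hf => by
    simp [hm f hf, hn f hf]
  zero_mem' := fun f _ => rfl
  smul_mem' c m hm := fun f hf => by
    simp [hm f hf]

lemma isC0_lTrans {f : G →ᵇ ℂ} (hf : IsC0 f) (g : G) : IsC0 (lTrans g f) := by
  have h1 : Tendsto (⇑(Homeomorph.mulLeft g)) (cocompact G) (cocompact G) :=
    tendsto_map.mono_right (le_of_eq ((Homeomorph.mulLeft g).map_cocompact))
  have h1' : Tendsto (fun x : G => g * x) (cocompact G) (cocompact G) := h1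
  exact hf.comp h1'

lemma isC0_rTransBCF {f : G →ᵇ ℂ} (hf : IsC0 f) (x : G) :
    IsC0 (f.compContinuous ⟨fun g : G => g * x, continuous_id.mul continuous_const⟩) := by
  have h1 : Tendsto (⇑(Homeomorph.mulRight x)) (cocompact G) (cocompact G) :=
    tendsto_map.mono_right (le_of_eq ((Homeomorph.mulRight x).map_cocompact))
  have h1' : Tendsto (fun g : G => g * x) (cocompact G) (cocompact G) := h1
  exact hf.comp h1'

/-- `C_0(G)^⊥` is a left ideal for the Arens product: if `n ∈ C_0(G)^⊥` then `m · n ∈ C_0(G)^⊥`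
for every `m`. -/
lemma arens_mem_C0perp_left (m : Ld G) {n : Ld G} (hn : n ∈ C0perp G) :
    arens m n ∈ C0perp G := by
  intro f hf
  have hz : arensFn n f = 0 := by
    apply Subtype.ext
    ext g
    exact hn (lTransL g f) (isC0_lTrans hf g)
  rw [arens_apply, hz, map_zero]

/-- Multiplying an element of `C_0(G)^⊥` by a point evaluation on the right stays in
`C_0(G)^⊥`. -/
lemma arens_evalChar_mem_C0perp {m : Ld G} (hm : m ∈ C0perp G) (x : G) :
    arens m (evalChar x) ∈ C0perp G := by
  intro f hf
  rw [arens_apply]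
  apply hm
  show IsC0 (arensBCF (evalChar x) f)
  have e : (arensBCF (evalChar x) f : G → ℂ) =
      ((f : G →ᵇ ℂ).compContinuous ⟨fun g : G => g * x, continuous_id.mul continuous_const⟩ :
        G → ℂ) := by
    funext g
    rfl
  show Tendsto (arensBCF (evalChar x) f : G → ℂ) (cocompact G) (𝓝 0)
  rw [e]
  exact isC0_rTransBCF hf x

/-- The multiplication on `C_0(G)^⊥` induced by the Arens product. -/
noncomputable instance : Mul (C0perp G) :=
  ⟨fun m n => ⟨arens m.1 n.1, arens_mem_C0perp_left m.1 n.2⟩⟩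

@[simp] lemma C0perp_mul_coe (m n : C0perp G) : ((m * n : C0perp G) : Ld G) = arens m.1 n.1 := rfl

end LucPaper
namespace LucPaper
variable {G : Type*} [Group G] [TopologicalSpace G] [IsTopologicalGroup G]

section WeakStar

variable {H : Type*} [Group H] [TopologicalSpace H] [IsTopologicalGroup H]

/-- Weak-star continuity for a map `C_0(G)^⊥ → C_0(H)^⊥`, phrased via filters:
whenever a filter converges pointwise (weak-star) to `m`, the images converge pointwise
(weak-star) to the image of `m`. -/
def WStarContinuousC0 (T : C0perp G → C0perp H) : Prop :=
  ∀ (l : Filter (C0perp G)) (m : C0perp G),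
    (∀ f : LUC G, Tendsto (fun n : C0perp G => (n : Ld G) f) l (𝓝 ((m : Ld G) f))) →
    ∀ f : LUC H, Tendsto (fun n : C0perp G => (T n : Ld H) f) l (𝓝 ((T m : Ld H) f))

/-- Weak-star continuity for a map `LUC(G)^* → LUC(H)^*`, phrased via filters. -/
def WStarContinuousD (T : Ld G → Ld H) : Prop :=
  ∀ (l : Filter (Ld G)) (m : Ld G),
    (∀ f : LUC G, Tendsto (fun n : Ld G => n f) l (𝓝 (m f))) →
    ∀ f : LUC H, Tendsto (fun n : Ld G => T n f) l (𝓝 (T m f))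

end WeakStar

section WeakDualSide

/-- `LUC(G)^*` equipped with its weak-star topology. -/
noncomputable abbrev LdW (G : Type*) [Group G] [TopologicalSpace G] [IsTopologicalGroup G] :=
  WeakDual ℂ (LUC G)

variable (G) in
/-- The `LUC`-compactification `G^{luc}` as a subset of the weak-star dual. -/
def gLucW : Set (LdW G) :=
  {m | m ≠ 0 ∧ ∀ f h : LUC G, m (f * h) = m f * m h}

/-- Evaluation at a point of `G` as an element of the weak-star dual. -/
noncomputable def evalCharW (g : G) : LdW G :=
  StrongDual.toWeakDual (evalChar g)

variable (G) in
/-- The corona `G^* = G^{luc} \ G` inside the weak-star dual. -/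
def gStarW : Set (LdW G) :=
  gLucW G \ Set.range (evalCharW (G := G))

/-- The Arens product transported to the weak-star dual. -/
noncomputable def arensW (m n : LdW G) : LdW G :=
  StrongDual.toWeakDual
    (arens (WeakDual.toStrongDual m) (WeakDual.toStrongDual n))

lemma evalCharW_mem_gLucW (g : G) : evalCharW g ∈ gLucW G := by
  have h := evalChar_mem_gLuc (g := g)
  constructor
  · intro h0
    apply h.1
    have : WeakDual.toStrongDual (evalCharW g) = WeakDual.toStrongDual (0 : LdW G) := by
      rw [h0]
    simpa [evalCharW] using this
  · intro f k
    exact h.2 f k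

end WeakDualSide

section FSpace

/-- `X` is an F-space: every bounded continuous real function `f` factors as `f = k·|f|`
with `k` bounded continuous. -/
def IsFSpace (X : Type*) [TopologicalSpace X] : Prop :=
  ∀ f : X →ᵇ ℝ, ∃ k : X →ᵇ ℝ, ∀ x : X, f x = k x * |f x|

/-- A P-point: every `G_δ` set containing the point is a neighbourhood of the point. -/
def IsPPoint {X : Type*} [TopologicalSpace X] (p : X) : Prop :=
  ∀ s : Set X, p ∈ s → (∃ U : ℕ → Set X, (∀ n, IsOpen (U n)) ∧ s = ⋂ n, U n) → s ∈ 𝓝 p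

end FSpace

end LucPaper


open LucPaper Filter Topology
open scoped BoundedContinuousFunction

/-! The corona `G^*` absorbs right multiplication by the idempotent `ι`: if `x ι = g ∈ G` then
`g ι = g`, so `ι = g⁻¹ g ι = 1`. Hence `α_l x = α (x ι)` is defined, continuous because right
multiplication is weak-star continuous, and extends `α` because `α ι = α ι²` forces `α ι = 1`.
Any homomorphic extension `β` satisfies `β x = β x β ι = β (x ι) = α (x ι)`. If `ι` commutes with
`G`, then `x ↦ α (x ι q ι)` and `x ↦ α (x q ι)` agree on `G`, since there
`α (g ι q ι) = α (ι g q ι) = α (g q ι)`; both are continuous, so they agree on the closure of `G`,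
which is all of `G^{luc}`, and then `α_l (p q) = α (p ι q ι) = α_l p α_l q`.

Density of `G` is the statement that every character `m` of `LUC(G)` is a weak-star limit of
point evaluations. Otherwise for some `f₁, …, fₙ` and `ε_i > 0` the function
`F = ∑ ε_i⁻² |f_i - m f_i|²` is `≥ 1` on `G`, yet `m F = 0`, contradicting `‖m‖ ≤ 1`
(which holds as `LUC(G)` is a Banach algebra). -/

namespace LucPaper

variable {G : Type*} [Group G] [TopologicalSpace G] [IsTopologicalGroup G]

lemma lTransL_one_left (f : LUC G) : lTransL 1 f = f :=
  Subtype.ext <| BoundedContinuousFunction.ext fun x => congrArg (f : G →ᵇ ℂ) (one_mul x)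

lemma arensFn_lTransL (n : Ld G) (g : G) (f : LUC G) :
    arensFn n (lTransL g f) = lTransL g (arensFn n f) :=
  Subtype.ext (lTrans_arensBCF n f g).symm

lemma arensFn_arens (n p : Ld G) (f : LUC G) :
    arensFn (arens n p) f = arensFn n (arensFn p f) :=
  Subtype.ext <| BoundedContinuousFunction.ext fun g =>
    congrArg n (arensFn_lTransL p g f)

lemma arensW_assoc (m n p : LdW G) :
    arensW (arensW m n) p = arensW m (arensW n p) :=
  DFunLike.ext _ _ fun f => congrArg m (arensFn_arens n p f).symm

lemma continuous_arensW_right (c : LdW G) : Continuous fun m : LdW G => arensW m c :=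
  WeakDual.continuous_of_continuous_eval fun f => WeakDual.eval_continuous (arensFn (c : Ld G) f)

lemma evalCharW_arensW_evalCharW (g h : G) :
    arensW (evalCharW g) (evalCharW h) = evalCharW (g * h) :=
  DFunLike.ext _ _ fun _ => rfl

lemma evalCharW_one_arensW (n : LdW G) : arensW (evalCharW 1) n = n :=
  DFunLike.ext _ _ fun f => congrArg n (lTransL_one_left f)

lemma gLucW_eq_characterSpace : gLucW G = WeakDual.characterSpace ℂ (LUC G) := rfl

lemma gLucW_apply_one {m : LdW G} (hm : m ∈ gLucW G) : m 1 = 1 :=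
  map_one (⟨m, hm⟩ : WeakDual.characterSpace ℂ (LUC G))

lemma arensFn_mul {n : LdW G} (hn : n ∈ gLucW G) (f h : LUC G) :
    arensFn (n : Ld G) (f * h) = arensFn n f * arensFn n h :=
  Subtype.ext <| BoundedContinuousFunction.ext fun g => by
    show n (lTransL g (f * h)) = n (lTransL g f) * n (lTransL g h)
    rw [lTransL_mul, hn.2]

lemma arensFn_one {n : LdW G} (hn : n ∈ gLucW G) : arensFn (n : Ld G) 1 = 1 :=
  Subtype.ext <| BoundedContinuousFunction.ext fun g => by
    show n (lTransL g 1) = 1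
    rw [show lTransL g (1 : LUC G) = 1 from Subtype.ext (lTrans_algebraMap g 1)]
    exact gLucW_apply_one hn

lemma arensW_mem_gLucW {m n : LdW G} (hm : m ∈ gLucW G) (hn : n ∈ gLucW G) :
    arensW m n ∈ gLucW G := by
  rw [gLucW_eq_characterSpace, WeakDual.CharacterSpace.eq_set_map_one_map_mul]
  refine ⟨?_, fun f h => ?_⟩
  · show m (arensFn (n : Ld G) 1) = 1
    rw [arensFn_one hn, gLucW_apply_one hm]
  · show m (arensFn (n : Ld G) (f * h)) = m (arensFn (n : Ld G) f) * m (arensFn (n : Ld G) h)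
    rw [arensFn_mul hn, hm.2]

noncomputable instance : Semigroup (gLucW G) where
  mul x y := ⟨arensW x.1 y.1, arensW_mem_gLucW x.2 y.2⟩
  mul_assoc x y z := Subtype.ext (arensW_assoc x.1 y.1 z.1)

lemma gLucW.coe_mul (x y : gLucW G) : ((x * y : gLucW G) : LdW G) = arensW x.1 y.1 := rfl

lemma gLucW.continuous_mul_right (y : gLucW G) : Continuous fun x : gLucW G => x * y :=
  ((continuous_arensW_right y.1).comp continuous_subtype_val).subtype_mk _

lemma arensW_mem_gStarW_of_idem {x ι : LdW G} (hx : x ∈ gLucW G) (hι : ι ∈ gStarW G)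
    (hιι : arensW ι ι = ι) : arensW x ι ∈ gStarW G := by
  refine ⟨arensW_mem_gLucW hx hι.1, ?_⟩
  rintro ⟨g, hg⟩
  have hgι : arensW (evalCharW g) ι = evalCharW g := by
    rw [hg, arensW_assoc, hιι]
  apply hι.2
  refine ⟨1, ?_⟩
  calc evalCharW 1 = arensW (evalCharW g⁻¹) (evalCharW g) := by
        rw [evalCharW_arensW_evalCharW, inv_mul_cancel]
    _ = arensW (evalCharW 1) ι := by
        rw [← hgι, ← arensW_assoc, evalCharW_arensW_evalCharW, inv_mul_cancel]
    _ = ι := evalCharW_one_arensW ι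

lemma isClosed_LUC : IsClosed (LUC G : Set (G →ᵇ ℂ)) := by
  refine isClosed_of_closure_subset fun f hf => ?_
  show Continuous fun g : G => lTrans g f
  refine continuous_of_uniform_approx_of_continuous fun u hu => ?_
  obtain ⟨ε, hε, hεu⟩ := Metric.mem_uniformity_dist.mp hu
  obtain ⟨h, hh, hfh⟩ := Metric.mem_closure_iff.mp hf ε hε
  refine ⟨fun g => lTrans g h, hh, fun g => hεu ?_⟩
  rw [dist_eq_norm, ← lTrans_sub]
  exact (norm_lTrans_le g _).trans_lt (dist_eq_norm f h ▸ hfh)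

instance : CompleteSpace (LUC G) := isClosed_LUC.isComplete.completeSpace_coe

instance : NormOneClass (LUC G) := ⟨norm_one (α := G →ᵇ ℂ)⟩

lemma LUC.norm_eq (f : LUC G) : ‖f‖ = ‖(f : G →ᵇ ℂ)‖ := rfl

lemma norm_apply_le_of_mem_gLucW {m : LdW G} (hm : m ∈ gLucW G) (f : LUC G) : ‖m f‖ ≤ ‖f‖ :=
  AlgHom.norm_apply_le_self (⟨m, hm⟩ : WeakDual.characterSpace ℂ (LUC G)) f

/-- Shifting `F` by `‖F‖` gives `‖F - ‖F‖‖ ≤ ‖F‖ - 1`, while `m (F - ‖F‖) = -‖F‖` if `m F = 0`. -/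
lemma apply_ne_zero_of_one_le {m : LdW G} (hm : m ∈ gLucW G) {F : LUC G} {S : G → ℝ}
    (hFS : ∀ x, (F : G →ᵇ ℂ) x = S x) (hS : ∀ x, 1 ≤ S x) : m F ≠ 0 := by
  intro hmF
  set c := ‖F‖
  have hSc : ∀ x, S x ≤ c := fun x => by
    have hx := (F : G →ᵇ ℂ).norm_coe_le_norm x
    rw [hFS, Complex.norm_real, Real.norm_eq_abs] at hx
    exact (le_abs_self _).trans hx
  have hshift : ‖((F - (c : ℂ) • 1 : LUC G) : G →ᵇ ℂ)‖ ≤ c - 1 := by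
    refine (BoundedContinuousFunction.norm_le (by linarith [hS 1, hSc 1])).2 fun x => ?_
    have hx : ((F - (c : ℂ) • 1 : LUC G) : G →ᵇ ℂ) x = ((S x - c : ℝ) : ℂ) := by
      simp [hFS]
    rw [hx, Complex.norm_real, Real.norm_eq_abs, abs_le]
    constructor <;> linarith [hS x, hSc x]
  have hmshift : m (F - (c : ℂ) • 1) = -(c : ℂ) := by
    rw [map_sub, map_smul, gLucW_apply_one hm, hmF, smul_eq_mul, mul_one, zero_sub]
  have := ((norm_apply_le_of_mem_gLucW hm _).trans_eq (LUC.norm_eq _)).trans hshift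
  rw [hmshift, norm_neg, Complex.norm_real, Real.norm_of_nonneg (norm_nonneg F)] at this
  linarith

noncomputable def conjLUC (f : LUC G) : LUC G :=
  ⟨star (f : G →ᵇ ℂ), continuous_star.comp f.2⟩

lemma conjLUC_apply (f : LUC G) (x : G) :
    (conjLUC f : G →ᵇ ℂ) x = starRingEnd ℂ ((f : G →ᵇ ℂ) x) := rfl

lemma exists_forall_norm_sub_lt {m : LdW G} (hm : m ∈ gLucW G) (J : Finset (LUC G))
    {ε : LUC G → ℝ} (hε : ∀ f ∈ J, 0 < ε f) :
    ∃ g : G, ∀ f ∈ J, ‖(f : G →ᵇ ℂ) g - m f‖ < ε f := by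
  by_contra! hfar
  let d : LUC G → LUC G := fun f => f - m f • 1
  have hmd : ∀ f, m (d f) = 0 := fun f => by
    rw [map_sub, map_smul, gLucW_apply_one hm, smul_eq_mul, mul_one, sub_self]
  refine apply_ne_zero_of_one_le hm
    (F := ∑ f ∈ J, (((ε f ^ 2)⁻¹ : ℝ) : ℂ) • (d f * conjLUC (d f)))
    (S := fun x => ∑ f ∈ J, (ε f ^ 2)⁻¹ * Complex.normSq ((f : G →ᵇ ℂ) x - m f)) ?_ ?_ ?_
  · intro x
    have hd : ∀ f, ((d f : LUC G) : G →ᵇ ℂ) x = (f : G →ᵇ ℂ) x - m f := fun f => by simp [d]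
    simp only [AddSubmonoidClass.coe_finsetSum, SetLike.val_smul, MulMemClass.coe_mul,
      BoundedContinuousFunction.coe_sum, Finset.sum_apply, BoundedContinuousFunction.coe_smul,
      BoundedContinuousFunction.coe_mul, Pi.mul_apply, conjLUC_apply, hd,
      Complex.mul_conj, smul_eq_mul, Complex.ofReal_sum, Complex.ofReal_mul]
  · intro x
    obtain ⟨f, hfJ, hf⟩ := hfar x
    have hεf := hε f hfJ
    calc (1 : ℝ) ≤ (ε f ^ 2)⁻¹ * Complex.normSq ((f : G →ᵇ ℂ) x - m f) := by
          rw [le_inv_mul_iff₀ (by positivity), mul_one, Complex.normSq_eq_norm_sq]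
          gcongr
      _ ≤ _ := Finset.single_le_sum
            (f := fun i => (ε i ^ 2)⁻¹ * Complex.normSq ((i : G →ᵇ ℂ) x - m i))
            (fun i _ => mul_nonneg (inv_nonneg.mpr (sq_nonneg _)) (Complex.normSq_nonneg _)) hfJ
  · simp only [map_sum, map_smul, hm.2, hmd, zero_mul, smul_zero, Finset.sum_const_zero]

lemma _root_.WeakDual.hasBasis_nhds_ball {𝕜 E : Type*} [NormedField 𝕜] [AddCommMonoid E]
    [Module 𝕜 E] [TopologicalSpace E] (m : WeakDual 𝕜 E) :
    (𝓝 m).HasBasis (fun p : Set E × (E → ℝ) => p.1.Finite ∧ ∀ f ∈ p.1, 0 < p.2 f)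
      (fun p => {n | ∀ f ∈ p.1, n f ∈ Metric.ball (m f) (p.2 f)}) := by
  have hind : 𝓝 m = Filter.comap (fun (n : WeakDual 𝕜 E) (f : E) => n f) (𝓝 fun f => m f) :=
    nhds_induced _ _
  rw [hind, nhds_pi]
  exact (Filter.hasBasis_pi fun _ => Metric.nhds_basis_ball).comap _

lemma gLucW_subset_closure_range_evalCharW :
    gLucW G ⊆ closure (Set.range (evalCharW (G := G))) := by
  intro m hm
  rw [mem_closure_iff_nhds_basis (WeakDual.hasBasis_nhds_ball m)]
  rintro ⟨I, ε⟩ ⟨hI, hε⟩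
  obtain ⟨g, hg⟩ := exists_forall_norm_sub_lt hm hI.toFinset
    fun f hf => hε f (hI.mem_toFinset.mp hf)
  refine ⟨evalCharW g, ⟨g, rfl⟩, fun f hf => ?_⟩
  rw [Metric.mem_ball, dist_eq_norm]
  exact hg f (hI.mem_toFinset.mpr hf)

noncomputable def evalLuc (g : G) : gLucW G := ⟨evalCharW g, evalCharW_mem_gLucW g⟩

lemma denseRange_evalLuc : DenseRange (evalLuc (G := G)) := fun x => by
  rw [closure_subtype, ← Set.range_comp]
  exact gLucW_subset_closure_range_evalCharW x.2

section Extension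

variable {K : Type*}

def IsArensHom [Mul K] {S : Set (LdW G)} (α : S → K) : Prop :=
  ∀ p q r : S, arensW p.1 q.1 = r.1 → α r = α p * α q

lemma IsArensHom.apply_eq_one_of_idem [Monoid K] [IsLeftCancelMul K] {S : Set (LdW G)}
    {α : S → K} (hα : IsArensHom α) {ι : S} (hι : arensW ι.1 ι.1 = ι.1) : α ι = 1 :=
  mul_eq_left.mp (hα ι ι ι hι).symm

noncomputable def mulIdem (ι : gStarW G) (hι : arensW ι.1 ι.1 = ι.1) (x : gLucW G) : gStarW G :=
  ⟨arensW x.1 ι.1, arensW_mem_gStarW_of_idem x.2 ι.2 hι⟩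

noncomputable def idemExtension (α : gStarW G → K) (ι : gStarW G) (hι : arensW ι.1 ι.1 = ι.1)
    (x : gLucW G) : K :=
  α (mulIdem ι hι x)

lemma continuous_idemExtension [TopologicalSpace K] {α : gStarW G → K} (hcont : Continuous α)
    {ι : gStarW G} (hι : arensW ι.1 ι.1 = ι.1) : Continuous (idemExtension α ι hι) :=
  hcont.comp (((continuous_arensW_right ι.1).comp continuous_subtype_val).subtype_mk _)

lemma idemExtension_coe [Monoid K] [IsLeftCancelMul K] {α : gStarW G → K} (hα : IsArensHom α)
    {ι : gStarW G} (hι : arensW ι.1 ι.1 = ι.1) (p : gStarW G) :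
    idemExtension α ι hι ⟨p.1, p.2.1⟩ = α p :=
  calc idemExtension α ι hι ⟨p.1, p.2.1⟩ = α p * α ι := hα p ι (mulIdem ι hι _) rfl
    _ = α p := by rw [hα.apply_eq_one_of_idem hι, mul_one]

lemma IsArensHom.eq_idemExtension [Monoid K] [IsLeftCancelMul K] {α : gStarW G → K}
    (hα : IsArensHom α) {ι : gStarW G} (hι : arensW ι.1 ι.1 = ι.1) {β : gLucW G → K}
    (hβ : IsArensHom β) (hβα : ∀ p : gStarW G, β ⟨p.1, p.2.1⟩ = α p) :
    β = idemExtension α ι hι := by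
  funext x
  calc β x = β x * β ⟨ι.1, ι.2.1⟩ := by rw [hβα, hα.apply_eq_one_of_idem hι, mul_one]
    _ = β ⟨(mulIdem ι hι x).1, (mulIdem ι hι x).2.1⟩ := (hβ _ _ _ rfl).symm
    _ = idemExtension α ι hι x := hβα (mulIdem ι hι x)

lemma isArensHom_idemExtension [Monoid K] [IsLeftCancelMul K] [TopologicalSpace K] [T2Space K]
    {α : gStarW G → K} (hcont : Continuous α) (hα : IsArensHom α) {ι : gStarW G}
    (hι : arensW ι.1 ι.1 = ι.1)
    (hcomm : ∀ g : G, arensW (evalCharW g) ι.1 = arensW ι.1 (evalCharW g)) :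
    IsArensHom (idemExtension α ι hι) := by
  set αl := idemExtension α ι hι
  let ι' : gLucW G := ⟨ι.1, ι.2.1⟩
  have absorb : ∀ y : gLucW G, αl (ι' * y) = αl y := fun y => by
    rw [← one_mul (αl y), ← hα.apply_eq_one_of_idem hι]
    exact hα ι (mulIdem ι hι y) (mulIdem ι hι (ι' * y)) (arensW_assoc _ _ _).symm
  have insert_idem : ∀ q x : gLucW G, αl (x * (ι' * q)) = αl (x * q) := fun q =>
    congrFun <| denseRange_evalLuc.equalizer
      ((continuous_idemExtension hcont hι).comp (gLucW.continuous_mul_right _))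
      ((continuous_idemExtension hcont hι).comp (gLucW.continuous_mul_right _)) <|
      funext fun g => by
        show αl (evalLuc g * (ι' * q)) = αl (evalLuc g * q)
        rw [← mul_assoc, show evalLuc g * ι' = ι' * evalLuc g from Subtype.ext (hcomm g),
          mul_assoc, absorb]
  intro p q r hpq
  obtain rfl : r = p * q := Subtype.ext hpq.symm
  calc αl (p * q) = αl (p * (ι' * q)) := (insert_idem q p).symm
    _ = αl p * αl q := hα (mulIdem ι hι p) (mulIdem ι hι q) (mulIdem ι hι (p * (ι' * q)))
          (by simp only [mulIdem, gLucW.coe_mul, arensW_assoc]; rfl)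

end Extension

end LucPaper

theorem idempotent_extension_of_hom_general
    {G : Type*} [Group G] [TopologicalSpace G] [IsTopologicalGroup G]
    {K : Type*} [Group K] [TopologicalSpace K] [T2Space K]
    (α : gStarW G → K) (hcont : Continuous α)
    (hhom : ∀ p q r : gStarW G, arensW p.1 q.1 = r.1 → α r = α p * α q)
    (ι : gStarW G) (hι : arensW ι.1 ι.1 = ι.1)
    (αl : gLucW G → K)
    (hαl : ∀ (x : gLucW G) (q : gStarW G), arensW x.1 ι.1 = q.1 → αl x = α q) :
    (Continuous αl ∧ (∀ p : gStarW G, αl ⟨p.1, p.2.1⟩ = α p) ∧ α ι = 1) ∧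
      (∀ β : gLucW G → K,
        (∀ p q r : gLucW G, arensW p.1 q.1 = r.1 → β r = β p * β q) →
        (∀ p : gStarW G, β ⟨p.1, p.2.1⟩ = α p) → β = αl) ∧
      ((∀ g : G, arensW (evalCharW g) ι.1 = arensW ι.1 (evalCharW g)) →
        ∀ p q r : gLucW G, arensW p.1 q.1 = r.1 → αl r = αl p * αl q) := by
  obtain rfl : αl = idemExtension α ι hι := funext fun x => hαl x _ rfl
  exact ⟨⟨continuous_idemExtension hcont hι, idemExtension_coe hhom hι,
      IsArensHom.apply_eq_one_of_idem hhom hι⟩,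
    fun β hβ hβα => IsArensHom.eq_idemExtension hhom hι hβ hβα,
    isArensHom_idemExtension hcont hhom hι⟩

/-- Let `α : G^* → K` be a continuous homomorphism into a compact group, `ι` an
idempotent of `G^*` and `α_l(x) = α(xι)`. Then (i) `α_l` is a continuous extension of `α` (and
`α(ι) = 1`), (ii) any homomorphic extension of `α` to `G^{luc}` equals `α_l`, and (iii) if `ι`
commutes with the elements of `G` then `α_l` is a homomorphism on `G^{luc}`. -/
theorem idempotent_extension_of_hom
    {G : Type*} [Group G] [TopologicalSpace G] [IsTopologicalGroup G]
    [T2Space G] [LocallyCompactSpace G]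
    {K : Type*} [Group K] [TopologicalSpace K] [IsTopologicalGroup K]
    [CompactSpace K] [T2Space K]
    (α : gStarW G → K) (hcont : Continuous α)
    (hhom : ∀ p q r : gStarW G, arensW p.1 q.1 = r.1 → α r = α p * α q)
    (ι : gStarW G) (hι : arensW ι.1 ι.1 = ι.1)
    (αl : gLucW G → K)
    (hαl : ∀ (x : gLucW G) (q : gStarW G), arensW x.1 ι.1 = q.1 → αl x = α q) :
    (Continuous αl ∧ (∀ p : gStarW G, αl ⟨p.1, p.2.1⟩ = α p) ∧ α ι = 1) ∧
      (∀ β : gLucW G → K,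
        (∀ p q r : gLucW G, arensW p.1 q.1 = r.1 → β r = β p * β q) →
        (∀ p : gStarW G, β ⟨p.1, p.2.1⟩ = α p) → β = αl) ∧
      ((∀ g : G, arensW (evalCharW g) ι.1 = arensW ι.1 (evalCharW g)) →
        ∀ p q r : gLucW G, arensW p.1 q.1 = r.1 → αl r = αl p * αl q) :=
  idempotent_extension_of_hom_general α hcont hhom ι hι αl hαl
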